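/- arXiv:1408.4637 — 10 statements merged into one kernel-verified Lean document; each statement's English description precedes it below -/
import Mathlib

section
/- Let G be a finite simple graph with a Z2-action θ (generator s) such that G is the edge-disjoint union of two spanning trees, each invariant under s, and no edge of G is fixed by s. Then there exists exactly one vertex of G fixed by s. -/
private lemma even_card_of_invol {α : Type*} [DecidableEq α] :
    ∀ (s : Finset α) (f : α → α), (∀ x ∈ s, f x ∈ s) → (∀ x ∈ s, f (f x) = x) →
    (∀ x ∈ s, f x ≠ x) → Even s.card := by
  intro s
  induction s using Finset.strongInduction with
  | _ s ih =>
    intro f hmem hinv hne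
    rcases s.eq_empty_or_nonempty with rfl | ⟨x, hx⟩
    · simp
    · have hfx : f x ∈ s := hmem x hx
      have hxne : f x ≠ x := hne x hx
      set t := (s.erase x).erase (f x) with ht
      have htsub : t ⊆ s := fun y hy =>
        Finset.mem_of_mem_erase (Finset.mem_of_mem_erase hy)
      have hxt : x ∉ t := fun h => (Finset.mem_erase.1 (Finset.mem_of_mem_erase h)).1 rfl
      have htss : t ⊂ s := Finset.ssubset_iff_of_subset htsub |>.2 ⟨x, hx, hxt⟩
      have hmem' : ∀ y ∈ t, f y ∈ t := by
        intro y hy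
        have hys : y ∈ s := htsub hy
        have hyx : y ≠ x := (Finset.mem_erase.1 (Finset.mem_of_mem_erase hy)).1
        have hyfx : y ≠ f x := (Finset.mem_erase.1 hy).1
        refine Finset.mem_erase.2 ⟨?_, Finset.mem_erase.2 ⟨?_, hmem y hys⟩⟩
        · intro h
          exact hyx (by rw [← hinv y hys, h, hinv x hx])
        · intro h
          exact hyfx (by rw [← hinv y hys, h])
      have heven : Even t.card := ih t htss f hmem'
        (fun y hy => hinv y (htsub hy)) (fun y hy => hne y (htsub hy))
      have hfx' : f x ∈ s.erase x := Finset.mem_erase.2 ⟨hxne, hfx⟩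
      have c1 : (s.erase x).card = s.card - 1 := Finset.card_erase_of_mem hx
      have c2 : t.card = (s.erase x).card - 1 := Finset.card_erase_of_mem hfx'
      have hpos : 0 < s.card := Finset.card_pos.2 ⟨x, hx⟩
      have hpos' : 0 < (s.erase x).card := Finset.card_pos.2 ⟨f x, hfx'⟩
      have hcard : s.card = t.card + 2 := by omega
      obtain ⟨r, hr⟩ := heven
      exact ⟨r + 1, by omega⟩

private lemma fixed_of_map_eq {V : Type*} (σ : V → V) :
    ∀ (l : List V), l.map σ = l → ∀ x ∈ l, σ x = x := by
  intro l
  induction l with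
  | nil => simp
  | cons a l ih =>
    intro h x hx
    simp only [List.map_cons, List.cons.injEq] at h
    rcases List.mem_cons.1 hx with rfl | hx
    · exact h.1
    · exact ih h.2 x hx

/-- A Z2-symmetric graph that is an edge-disjoint union of two invariant
spanning trees with no fixed edge has exactly one fixed vertex. -/
theorem stmt_0 {V : Type*} [Fintype V] (G : SimpleGraph V) (σ : V ≃ V)
    (hinv : ∀ a, σ (σ a) = a)
    (haut : ∀ a b, G.Adj a b ↔ G.Adj (σ a) (σ b))
    (T1 T2 : SimpleGraph V)
    (hsup : T1 ⊔ T2 = G)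
    (hdisj : Disjoint T1.edgeSet T2.edgeSet)
    (hT1 : T1.IsTree) (hT2 : T2.IsTree)
    (hT1inv : ∀ a b, T1.Adj a b → T1.Adj (σ a) (σ b))
    (hT2inv : ∀ a b, T2.Adj a b → T2.Adj (σ a) (σ b))
    (hnofix : ∀ a b, G.Adj a b → ¬ ((σ a = a ∧ σ b = b) ∨ (σ a = b ∧ σ b = a))) :
    ∃! v : V, σ v = v := by
  classical
  have hle : T1 ≤ G := hsup ▸ (le_sup_left : T1 ≤ T1 ⊔ T2)
  -- Uniqueness: no two distinct fixed vertices.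
  have key : ∀ a b : V, σ a = a → σ b = b → a = b := by
    intro u v hu hv
    by_contra hne
    obtain ⟨p, hp⟩ := (hT1.existsUnique_path u v).exists
    let f : T1 →g T1 := ⟨σ, fun {a b} h => hT1inv a b h⟩
    have hq : ((p.map f).copy hu hv).IsPath := by
      rw [SimpleGraph.Walk.isPath_copy]
      exact SimpleGraph.Walk.map_isPath_of_injective (fun a b h => σ.injective h) hp
    have heq : (p.map f).copy hu hv = p :=
      (hT1.existsUnique_path u v).unique hq hp
    have hsupp : p.support.map σ = p.support := by
      have := congrArg SimpleGraph.Walk.support heq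
      rwa [SimpleGraph.Walk.support_copy, SimpleGraph.Walk.support_map] at this
    obtain ⟨w, hadj, p', rfl⟩ := p.exists_eq_cons_of_ne hne
    have hw : σ w = w := by
      refine fixed_of_map_eq σ _ hsupp w ?_
      simp [SimpleGraph.Walk.support_cons]
    exact hnofix u w (hle hadj) (Or.inl ⟨hu, hw⟩)
  -- Existence via parity.
  have hedge : Even T1.edgeFinset.card := by
    refine even_card_of_invol _ (Sym2.map σ) ?_ ?_ ?_
    · intro e he
      induction e with
      | _ a b =>
        rw [SimpleGraph.mem_edgeFinset] at he ⊢
        rw [Sym2.map_pair_eq]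
        rw [SimpleGraph.mem_edgeSet] at he ⊢
        exact hT1inv a b he
    · intro e _
      induction e with
      | _ a b => simp [hinv]
    · intro e he
      induction e with
      | _ a b =>
        rw [SimpleGraph.mem_edgeFinset, SimpleGraph.mem_edgeSet] at he
        intro h
        rw [Sym2.map_pair_eq, Sym2.eq_iff] at h
        exact hnofix a b (hle he) h
  have hcardV : T1.edgeFinset.card + 1 = Fintype.card V := hT1.card_edgeFinset
  have hnonfix : Even (Finset.univ.filter (fun v : V => ¬ σ v = v)).card := by
    refine even_card_of_invol _ σ ?_ ?_ ?_
    · intro x hx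
      simp only [Finset.mem_filter, Finset.mem_univ, true_and] at hx ⊢
      intro h
      exact hx (σ.injective h)
    · intro x _; exact hinv x
    · intro x hx
      simpa using hx
  have hsplit : (Finset.univ.filter (fun v : V => σ v = v)).card
      + (Finset.univ.filter (fun v : V => ¬ σ v = v)).card = Fintype.card V :=
    Finset.card_filter_add_card_filter_not _
  have hodd : (Finset.univ.filter (fun v : V => σ v = v)).card ≠ 0 := by
    intro h0
    obtain ⟨r, hr⟩ := hedge
    obtain ⟨m, hm⟩ := hnonfix
    omega
  obtain ⟨v, hv⟩ := Finset.card_ne_zero.1 hodd |>.exists_mem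
  simp only [Finset.mem_filter, Finset.mem_univ, true_and] at hv
  exact ⟨v, hv, fun y hy => key y v hy hv⟩
end

section
/- Let G be a finite simple graph with a Z2-action θ (generator s) such that G is the edge-disjoint union of two s-invariant spanning trees and no edge is fixed by s. If v is a vertex of degree 3 in G, then the neighbourhoods N(v) and N(sv) either (i) are disjoint, (ii) intersect in exactly one vertex, which is the unique fixed vertex, (iii) intersect in exactly two vertices, neither of which is fixed by s, or (iv) intersect in exactly three vertices, exactly one of which is fixed by s. -/
/-!
The involution `σ` preserves `S = N(v) ∩ N(σ v)`, so the points of `S` it moves come in pairs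
and `|S|` has the parity of the number of fixed points in `S`. An involution of a tree that
fixes no edge has at most one fixed vertex: it maps the unique path between two fixed vertices
onto itself, so the first edge of that path would be fixed as well. Hence `S` contains at most
one fixed point, and `|S| ≤ 3` leaves exactly the four listed configurations.
-/

open Function Set

theorem Function.Involutive.ncard_modEq_ncard_inter_fixedPoints {α : Type*} {f : α → α}
    (hf : Involutive f) {S : Set α} (hS : S.Finite) (hSf : MapsTo f S S) :
    S.ncard ≡ (S ∩ fixedPoints f).ncard [MOD 2] := by
  classical
  have := hS.fintype
  let g : Function.End S := hSf.restrict f S S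
  have hg : g ^ 2 ^ 1 = 1 := funext fun x => Subtype.ext (hf x)
  have hfix : fixedPoints g = Subtype.val ⁻¹' fixedPoints f := by
    ext x
    simp [g, IsFixedPt, Subtype.ext_iff]
  have key := Equiv.Perm.card_fixedPoints_modEq hg
  rwa [← Nat.card_eq_fintype_card, ← Nat.card_eq_fintype_card, Nat.card_coe_set_eq,
    Nat.card_coe_set_eq, ← ncard_image_of_injective _ Subtype.val_injective, hfix,
    Subtype.image_preimage_coe] at key

theorem Function.Involutive.eq_of_mapsTo_of_ncard_le_three {α : Type*} {f : α → α}
    (hf : Involutive f) (hfix : (fixedPoints f).Subsingleton) {S : Set α} (hS : S.Finite)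
    (hSf : MapsTo f S S) (hS3 : S.ncard ≤ 3) :
    S = ∅ ∨ (∃ u, f u = u ∧ S = {u}) ∨
      (∃ u w, u ≠ w ∧ f u ≠ u ∧ f w ≠ w ∧ S = {u, w}) ∨
      (∃ u w x, u ≠ w ∧ u ≠ x ∧ w ≠ x ∧ f u = u ∧ f w ≠ w ∧ f x ≠ x ∧
        S = {u, w, x}) := by
  have hpar := hf.ncard_modEq_ncard_inter_fixedPoints hS hSf
  have hsplit := ncard_inter_add_ncard_sdiff_eq_ncard S (fixedPoints f) hS
  rcases (hfix.anti inter_subset_right).eq_empty_or_singleton with hF | ⟨u, hF⟩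
  · have hmoved : ∀ y ∈ S, f y ≠ y := fun y hy hfy =>
      eq_empty_iff_forall_notMem.1 hF y ⟨hy, hfy⟩
    rw [hF, ncard_empty] at hpar hsplit
    obtain h0 | h2 : S.ncard = 0 ∨ S.ncard = 2 := by unfold Nat.ModEq at hpar; omega
    · exact Or.inl ((ncard_eq_zero hS).1 h0)
    · obtain ⟨u, w, huw, rfl⟩ := ncard_eq_two.1 h2
      exact Or.inr (Or.inr (Or.inl ⟨u, w, huw, hmoved u (by simp), hmoved w (by simp), rfl⟩))
  · have hu : u ∈ S ∩ fixedPoints f := hF ▸ mem_singleton u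
    have hS_eq : S = insert u (S \ fixedPoints f) := by
      rw [← singleton_union, ← hF, inter_union_sdiff]
    rw [hF, ncard_singleton] at hpar hsplit
    obtain h1 | h3 : S.ncard = 1 ∨ S.ncard = 3 := by unfold Nat.ModEq at hpar; omega
    · refine Or.inr (Or.inl ⟨u, hu.2, ?_⟩)
      rw [hS_eq, (ncard_eq_zero (hS.sdiff)).1 (by omega), insert_empty_eq]
    · obtain ⟨w, x, hwx, hD⟩ := ncard_eq_two.1 (show (S \ fixedPoints f).ncard = 2 by omega)
      have hw : f w ≠ w := (hD ▸ mem_insert w {x} : w ∈ S \ fixedPoints f).2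
      have hx : f x ≠ x := (hD ▸ mem_insert_of_mem w rfl : x ∈ S \ fixedPoints f).2
      rw [hD] at hS_eq
      refine Or.inr (Or.inr (Or.inr ⟨u, w, x, ?_, ?_, hwx, hu.2, hw, hx, hS_eq⟩))
      · rintro rfl; exact hw hu.2
      · rintro rfl; exact hx hu.2

open SimpleGraph in
theorem SimpleGraph.IsAcyclic.eq_of_isFixedPt {V : Type*} {T : SimpleGraph V} (hT : T.IsAcyclic)
    (f : T →g T) (hf : Injective f) (hedge : ∀ a b, T.Adj a b → f a = a → f b ≠ b)
    {a b : V} (hab : T.Reachable a b) (ha : f a = a) (hb : f b = b) : a = b := by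
  classical
  by_contra hne
  obtain ⟨p, hp⟩ := hab.exists_isPath
  have hmap : ((p.map f).copy ha hb).IsPath := by
    rw [Walk.isPath_copy]
    exact hp.map hf
  have hp_eq : (⟨_, hmap⟩ : T.Path a b) = ⟨p, hp⟩ := (hT.subsingleton_path a b).elim _ _
  have hadj : T.Adj a (p.getVert 1) := by
    simpa using p.adj_getVert_succ (Walk.not_nil_iff_lt_length.mp (Walk.not_nil_of_ne hne))
  refine hedge _ _ hadj ha ?_
  simpa [Walk.getVert_copy, Walk.getVert_map] using
    congrArg (fun r : T.Path a b => r.val.getVert 1) hp_eq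

theorem stmt_3_general {V : Type*} (G : SimpleGraph V) (σ : V ≃ V)
    (hinv : ∀ a, σ (σ a) = a)
    (haut : ∀ a b, G.Adj a b ↔ G.Adj (σ a) (σ b))
    (T1 T2 : SimpleGraph V)
    (hsup : T1 ⊔ T2 = G)
    (hT1 : T1.IsTree)
    (hT1inv : ∀ a b, T1.Adj a b → T1.Adj (σ a) (σ b))
    (hnofix : ∀ a b, G.Adj a b → ¬ ((σ a = a ∧ σ b = b) ∨ (σ a = b ∧ σ b = a)))
    (v : V) (hdeg : (G.neighborSet v).ncard = 3) :
    (G.neighborSet v ∩ G.neighborSet (σ v) = ∅) ∨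
    (∃ u, σ u = u ∧ G.neighborSet v ∩ G.neighborSet (σ v) = {u}) ∨
    (∃ u w, u ≠ w ∧ σ u ≠ u ∧ σ w ≠ w ∧
      G.neighborSet v ∩ G.neighborSet (σ v) = {u, w}) ∨
    (∃ u w x, u ≠ w ∧ u ≠ x ∧ w ≠ x ∧ σ u = u ∧ σ w ≠ w ∧ σ x ≠ x ∧
      G.neighborSet v ∩ G.neighborSet (σ v) = {u, w, x}) := by
  have hT1G : T1 ≤ G := hsup ▸ le_sup_left
  have hfix : (fixedPoints σ).Subsingleton := fun a ha b hb =>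
    hT1.isAcyclic.eq_of_isFixedPt ⟨σ, hT1inv _ _⟩ σ.injective
      (fun x y hxy hx hy => hnofix x y (hT1G hxy) (Or.inl ⟨hx, hy⟩)) (hT1.connected a b) ha hb
  have hfinite : (G.neighborSet v).Finite := finite_of_ncard_ne_zero (by omega)
  have hmaps : MapsTo σ (G.neighborSet v ∩ G.neighborSet (σ v))
      (G.neighborSet v ∩ G.neighborSet (σ v)) := fun u ⟨hvu, hσvu⟩ =>
    ⟨by simpa [hinv] using (haut _ _).1 hσvu, (haut _ _).1 hvu⟩
  exact (show Involutive σ from hinv).eq_of_mapsTo_of_ncard_le_three hfix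
    (hfinite.inter_of_left _) hmaps (hdeg ▸ ncard_le_ncard inter_subset_left hfinite)

/-- In an admissible Z2-symmetric graph, the neighbourhoods of a degree-3
vertex v and of sv are either disjoint, intersect in exactly one (fixed)
vertex, in exactly two non-fixed vertices, or in three vertices exactly one
of which is fixed. -/
theorem stmt_3 {V : Type*} [Fintype V] (G : SimpleGraph V) (σ : V ≃ V)
    (hinv : ∀ a, σ (σ a) = a)
    (haut : ∀ a b, G.Adj a b ↔ G.Adj (σ a) (σ b))
    (T1 T2 : SimpleGraph V)
    (hsup : T1 ⊔ T2 = G)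
    (hdisj : Disjoint T1.edgeSet T2.edgeSet)
    (hT1 : T1.IsTree) (hT2 : T2.IsTree)
    (hT1inv : ∀ a b, T1.Adj a b → T1.Adj (σ a) (σ b))
    (hT2inv : ∀ a b, T2.Adj a b → T2.Adj (σ a) (σ b))
    (hnofix : ∀ a b, G.Adj a b → ¬ ((σ a = a ∧ σ b = b) ∨ (σ a = b ∧ σ b = a)))
    (v : V) (hdeg : (G.neighborSet v).ncard = 3) :
    (G.neighborSet v ∩ G.neighborSet (σ v) = ∅) ∨
    (∃ u, σ u = u ∧ G.neighborSet v ∩ G.neighborSet (σ v) = {u}) ∨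
    (∃ u w, u ≠ w ∧ σ u ≠ u ∧ σ w ≠ w ∧
      G.neighborSet v ∩ G.neighborSet (σ v) = {u, w}) ∨
    (∃ u w x, u ≠ w ∧ u ≠ x ∧ w ≠ x ∧ σ u = u ∧ σ w ≠ w ∧ σ x ≠ x ∧
      G.neighborSet v ∩ G.neighborSet (σ v) = {u, w, x}) :=
  stmt_3_general G σ hinv haut T1 T2 hsup hT1 hT1inv hnofix v hdeg
end

section
/- Let G be a finite simple graph with a Z2-action θ (generator s) such that G is the edge-disjoint union of two s-invariant spanning trees and no edge is fixed by s. If v is a vertex of degree 2, then v ≠ s(v), and the graph H obtained by deleting v and s(v) from G is again the edge-disjoint union of two s-invariant spanning trees with no edge fixed by s. -/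
open SimpleGraph

/-- In a graph where `v` has unique neighbor `a`, a path between two vertices
different from `v` avoids `v`. -/
lemma aux_leaf_not_mem_support {V : Type*} {T : SimpleGraph V} {a v : V}
    (ha : T.neighborSet v = {a}) :
    ∀ {x y : V} (p : T.Walk x y), p.IsPath → x ≠ v → y ≠ v → v ∉ p.support := by
  intro x y p
  induction p with
  | nil =>
    intro _ hx _
    simpa using fun h => hx h.symm
  | @cons x z y h q ih =>
    intro hp hx hy
    rw [SimpleGraph.Walk.support_cons, List.mem_cons]
    push_neg
    refine ⟨fun h' => hx h'.symm, ?_⟩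
    rcases eq_or_ne z v with hz | hz
    · subst hz
      cases q with
      | nil => exact absurd rfl hy
      | @cons _ w _ h' q' =>
        exfalso
        have hxa : x = a := by
          have : x ∈ T.neighborSet z := h.symm
          rw [ha] at this; exact this
        have hwa : w = a := by
          have : w ∈ T.neighborSet z := h'
          rw [ha] at this; exact this
        have hx_not : x ∉ (SimpleGraph.Walk.cons h' q').support :=
          ((SimpleGraph.Walk.cons_isPath_iff _ _).mp hp).2
        exact hx_not (by rw [SimpleGraph.Walk.support_cons]; exact List.mem_cons_of_mem _ (by
          rw [hxa, ← hwa]; exact SimpleGraph.Walk.start_mem_support q'))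
    · exact ih hp.of_cons hz hy

lemma aux_exists_nbr {V : Type*} {T : SimpleGraph V} {v w : V} (hvw : v ≠ w)
    (h : T.Reachable v w) : (T.neighborSet v).Nonempty := by
  obtain ⟨p⟩ := h
  cases p with
  | nil => exact absurd rfl hvw
  | cons h q => exact ⟨_, h⟩

/-- Deleting a degree-2 vertex `v` and its image `σ v` from an admissible
Z2-symmetric graph yields again an admissible Z2-symmetric graph (spanning
the remaining vertices). -/
theorem stmt_6 {V : Type*} [Fintype V] (G : SimpleGraph V) (σ : V ≃ V)
    (hinv : ∀ a, σ (σ a) = a)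
    (haut : ∀ a b, G.Adj a b ↔ G.Adj (σ a) (σ b))
    (T1 T2 : SimpleGraph V)
    (hsup : T1 ⊔ T2 = G)
    (hdisj : Disjoint T1.edgeSet T2.edgeSet)
    (hT1 : T1.IsTree) (hT2 : T2.IsTree)
    (hT1inv : ∀ a b, T1.Adj a b → T1.Adj (σ a) (σ b))
    (hT2inv : ∀ a b, T2.Adj a b → T2.Adj (σ a) (σ b))
    (hnofix : ∀ a b, G.Adj a b → ¬ ((σ a = a ∧ σ b = b) ∨ (σ a = b ∧ σ b = a)))
    (v : V) (hdeg : (G.neighborSet v).ncard = 2) :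
    v ≠ σ v ∧
    (let H := G.deleteEdges {e : Sym2 V | v ∈ e ∨ σ v ∈ e}
     ∃ H1 H2 : SimpleGraph V,
       H1 ⊔ H2 = H ∧
       Disjoint H1.edgeSet H2.edgeSet ∧
       H1.IsAcyclic ∧ H2.IsAcyclic ∧
       (∀ x y : V, x ≠ v → x ≠ σ v → y ≠ v → y ≠ σ v → H1.Reachable x y) ∧
       (∀ x y : V, x ≠ v → x ≠ σ v → y ≠ v → y ≠ σ v → H2.Reachable x y) ∧
       (∀ a b, H1.Adj a b → H1.Adj (σ a) (σ b)) ∧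
       (∀ a b, H2.Adj a b → H2.Adj (σ a) (σ b)) ∧
       (∀ a b, H.Adj a b → ¬ ((σ a = a ∧ σ b = b) ∨ (σ a = b ∧ σ b = a)))) := by
  classical
  have hσeq : ∀ c d : V, σ c = d ↔ c = σ d := fun c d =>
    ⟨fun h => by rw [← h, hinv], fun h => by rw [h, hinv]⟩
  have hGadj : ∀ a b, G.Adj a b ↔ T1.Adj a b ∨ T2.Adj a b := by
    intro a b; rw [← hsup]; simp
  -- the two neighbor sets are disjoint
  have hdisjN : Disjoint (T1.neighborSet v) (T2.neighborSet v) := by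
    rw [Set.disjoint_left]
    intro x h1 h2
    exact Set.disjoint_left.mp hdisj (T1.mem_edgeSet.2 h1) (T2.mem_edgeSet.2 h2)
  have hun : G.neighborSet v = T1.neighborSet v ∪ T2.neighborSet v := by
    ext x; simp [SimpleGraph.mem_neighborSet, hGadj]
  -- a vertex distinct from v
  have hNne : (G.neighborSet v).Nonempty :=
    Set.nonempty_of_ncard_ne_zero (by rw [hdeg]; omega)
  obtain ⟨w, hw⟩ := hNne
  have hvw : v ≠ w := (G.ne_of_adj hw)
  have hN1ne : (T1.neighborSet v).Nonempty :=
    aux_exists_nbr hvw (hT1.isConnected.preconnected v w)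
  have hN2ne : (T2.neighborSet v).Nonempty :=
    aux_exists_nbr hvw (hT2.isConnected.preconnected v w)
  have hcardsum : (T1.neighborSet v).ncard + (T2.neighborSet v).ncard = 2 := by
    rw [← Set.ncard_union_eq hdisjN (Set.toFinite _) (Set.toFinite _), ← hun, hdeg]
  have hc1 : (T1.neighborSet v).ncard = 1 := by
    have h1 := (Set.ncard_pos (Set.toFinite _)).2 hN1ne
    have h2 := (Set.ncard_pos (Set.toFinite _)).2 hN2ne
    omega
  have hc2 : (T2.neighborSet v).ncard = 1 := by
    have h1 := (Set.ncard_pos (Set.toFinite _)).2 hN1ne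
    have h2 := (Set.ncard_pos (Set.toFinite _)).2 hN2ne
    omega
  obtain ⟨a, ha⟩ := Set.ncard_eq_one.mp hc1
  obtain ⟨b, hb⟩ := Set.ncard_eq_one.mp hc2
  have hva : T1.Adj v a := by
    have : a ∈ T1.neighborSet v := by rw [ha]; rfl
    exact this
  have hvb : T2.Adj v b := by
    have : b ∈ T2.neighborSet v := by rw [hb]; rfl
    exact this
  -- v is not fixed
  have hvσ : v ≠ σ v := by
    intro h
    have h1 : T1.Adj v (σ a) := by
      have := hT1inv v a hva
      rwa [← h] at this
    have h2 : σ a = a := by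
      have : σ a ∈ T1.neighborSet v := h1
      rw [ha] at this; exact this
    exact hnofix v a ((hGadj v a).2 (Or.inl hva)) (Or.inl ⟨h.symm, h2⟩)
  -- σ v is a leaf with neighbor σ a (resp. σ b)
  have haσ : T1.neighborSet (σ v) = {σ a} := by
    ext x
    simp only [SimpleGraph.mem_neighborSet, Set.mem_singleton_iff]
    constructor
    · intro hx
      have : T1.Adj v (σ x) := by
        have := hT1inv (σ v) x hx
        rwa [hinv] at this
      have hxa : σ x = a := by
        have : σ x ∈ T1.neighborSet v := this
        rw [ha] at this; exact this
      rw [← hxa, hinv]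
    · rintro rfl
      exact hT1inv v a hva
  have hbσ : T2.neighborSet (σ v) = {σ b} := by
    ext x
    simp only [SimpleGraph.mem_neighborSet, Set.mem_singleton_iff]
    constructor
    · intro hx
      have : T2.Adj v (σ x) := by
        have := hT2inv (σ v) x hx
        rwa [hinv] at this
      have hxb : σ x = b := by
        have : σ x ∈ T2.neighborSet v := this
        rw [hb] at this; exact this
      rw [← hxb, hinv]
    · rintro rfl
      exact hT2inv v b hvb
  refine ⟨hvσ, ?_⟩
  intro H
  set S : Set (Sym2 V) := {e : Sym2 V | v ∈ e ∨ σ v ∈ e} with hS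
  -- edges of a path avoiding v and σ v are not in S
  have edge_avoid : ∀ (T : SimpleGraph V) {x y : V} (p : T.Walk x y),
      v ∉ p.support → σ v ∉ p.support → ∀ e ∈ p.edges, e ∉ S := by
    intro T x y p hv hσv e he heS
    induction e with
    | h t u =>
      rcases heS with hm | hm <;> rw [Sym2.mem_iff] at hm <;> rcases hm with rfl | rfl
      · exact hv (p.fst_mem_support_of_mem_edges he)
      · exact hv (p.snd_mem_support_of_mem_edges he)
      · exact hσv (p.fst_mem_support_of_mem_edges he)
      · exact hσv (p.snd_mem_support_of_mem_edges he)
  have reach : ∀ (T : SimpleGraph V) (c d : V), T.IsTree →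
      T.neighborSet v = {c} → T.neighborSet (σ v) = {d} →
      ∀ x y : V, x ≠ v → x ≠ σ v → y ≠ v → y ≠ σ v →
        (T.deleteEdges S).Reachable x y := by
    intro T c d hT hc hd x y hxv hxs hyv hys
    obtain ⟨p⟩ := hT.isConnected.preconnected x y
    let q := p.toPath
    have h1 : v ∉ (q : T.Walk x y).support :=
      aux_leaf_not_mem_support hc _ q.2 hxv hyv
    have h2 : σ v ∉ (q : T.Walk x y).support :=
      aux_leaf_not_mem_support hd _ q.2 hxs hys
    exact ⟨(q : T.Walk x y).toDeleteEdges S (edge_avoid T _ h1 h2)⟩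
  refine ⟨T1.deleteEdges S, T2.deleteEdges S, ?_, ?_, ?_, ?_, ?_, ?_, ?_, ?_, ?_⟩
  · ext x y
    show (T1.deleteEdges S ⊔ T2.deleteEdges S).Adj x y ↔ (G.deleteEdges S).Adj x y
    rw [← hsup]
    simp only [SimpleGraph.sup_adj, SimpleGraph.deleteEdges_adj]
    tauto
  · refine hdisj.mono ?_ ?_ <;>
      · rw [SimpleGraph.edgeSet_deleteEdges]; exact Set.diff_subset
  · intro u c hc
    exact hT1.IsAcyclic (c.mapLe (T1.deleteEdges_le S))
      ((Walk.mapLe_isCycle (T1.deleteEdges_le S)).mpr hc)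
  · intro u c hc
    exact hT2.IsAcyclic (c.mapLe (T2.deleteEdges_le S))
      ((Walk.mapLe_isCycle (T2.deleteEdges_le S)).mpr hc)
  · exact reach T1 a (σ a) hT1 ha haσ
  · exact reach T2 b (σ b) hT2 hb hbσ
  · intro x y h
    rw [SimpleGraph.deleteEdges_adj] at h ⊢
    refine ⟨hT1inv x y h.1, ?_⟩
    intro hmem
    apply h.2
    rcases hmem with hm | hm <;> rw [Sym2.mem_iff] at hm <;>
      [skip; skip] <;> rcases hm with hm | hm
    · exact Or.inr (Sym2.mem_iff.2 (Or.inl (by rw [hm, hinv])))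
    · exact Or.inr (Sym2.mem_iff.2 (Or.inr (by rw [hm, hinv])))
    · exact Or.inl (Sym2.mem_iff.2 (Or.inl (σ.injective hm)))
    · exact Or.inl (Sym2.mem_iff.2 (Or.inr (σ.injective hm)))
  · intro x y h
    rw [SimpleGraph.deleteEdges_adj] at h ⊢
    refine ⟨hT2inv x y h.1, ?_⟩
    intro hmem
    apply h.2
    rcases hmem with hm | hm <;> rw [Sym2.mem_iff] at hm <;>
      [skip; skip] <;> rcases hm with hm | hm
    · exact Or.inr (Sym2.mem_iff.2 (Or.inl (by rw [hm, hinv])))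
    · exact Or.inr (Sym2.mem_iff.2 (Or.inr (by rw [hm, hinv])))
    · exact Or.inl (Sym2.mem_iff.2 (Or.inl (σ.injective hm)))
    · exact Or.inl (Sym2.mem_iff.2 (Or.inr (σ.injective hm)))
  · intro x y h
    exact hnofix x y ((SimpleGraph.deleteEdges_adj.mp h).1)
end

section
/- Let (G,θ) be an admissible pair with generator s, let v be a vertex of degree 3 with N(v) and N(sv) disjoint, with G1, G2 the two s-invariant edge-disjoint spanning trees, and suppose the edges vv1 and vv2 both lie in G1 where N(v)={v1,v2,v3}. If v1v2 is an edge of G, then v1v2 lies in G2, and neither v1(s v2) nor (s v1)v2 is an edge of G. -/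
open SimpleGraph


/-- For a degree-3 vertex `v` with `N(v)` and `N(σ v)` disjoint, with
`v v1, v v2 ∈ T1`: if `v1 v2` is an edge of `G` then it lies in `T2`, and
neither `v1 (σ v2)` nor `(σ v1) v2` is an edge of `G`. -/
theorem stmt_7 {V : Type*} [Fintype V] (G : SimpleGraph V) (σ : V ≃ V)
    (hinv : ∀ a, σ (σ a) = a)
    (haut : ∀ a b, G.Adj a b ↔ G.Adj (σ a) (σ b))
    (T1 T2 : SimpleGraph V)
    (hsup : T1 ⊔ T2 = G)
    (hdisj : Disjoint T1.edgeSet T2.edgeSet)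
    (hT1 : T1.IsTree) (hT2 : T2.IsTree)
    (hT1inv : ∀ a b, T1.Adj a b → T1.Adj (σ a) (σ b))
    (hT2inv : ∀ a b, T2.Adj a b → T2.Adj (σ a) (σ b))
    (hnofix : ∀ a b, G.Adj a b → ¬ ((σ a = a ∧ σ b = b) ∨ (σ a = b ∧ σ b = a)))
    (v v1 v2 v3 : V)
    (hdeg : (G.neighborSet v).ncard = 3)
    (hN : G.neighborSet v = {v1, v2, v3})
    (hNdisj : Disjoint (G.neighborSet v) (G.neighborSet (σ v)))
    (h1 : T1.Adj v v1) (h2 : T1.Adj v v2)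
    (hadj : G.Adj v1 v2) :
    T2.Adj v1 v2 ∧ ¬ G.Adj v1 (σ v2) ∧ ¬ G.Adj (σ v1) v2 := by
  have hle1 : T1 ≤ G := hsup ▸ le_sup_left
  have hG1 : G.Adj v v1 := hle1 h1
  have hG2 : G.Adj v v2 := hle1 h2
  have hσinj : Function.Injective σ := σ.injective
  have hv1 : v ≠ v1 := h1.ne
  have hv2 : v ≠ v2 := h2.ne
  have h12 : v1 ≠ v2 := hadj.ne
  have hmem1 : v1 ∈ G.neighborSet v := hG1
  have hmem2 : v2 ∈ G.neighborSet v := hG2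
  have hmemσ1 : σ v1 ∈ G.neighborSet (σ v) := (haut v v1).mp hG1
  have hmemσ2 : σ v2 ∈ G.neighborSet (σ v) := (haut v v2).mp hG2
  have hd := Set.disjoint_left.mp hNdisj
  have h1σ1 : v1 ≠ σ v1 := fun h => hd hmem1 (h ▸ hmemσ1)
  have h1σ2 : v1 ≠ σ v2 := fun h => hd hmem1 (h ▸ hmemσ2)
  have h2σ1 : v2 ≠ σ v1 := fun h => hd hmem2 (h ▸ hmemσ1)
  have h2σ2 : v2 ≠ σ v2 := fun h => hd hmem2 (h ▸ hmemσ2)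
  have hvσv : v ≠ σ v := fun h => hd hmem1 (h ▸ hmem1)
  have hvσ1 : v ≠ σ v1 := by
    intro h
    exact hnofix v v1 hG1 (Or.inr ⟨by rw [h, hinv], h.symm⟩)
  have hvσ2 : v ≠ σ v2 := by
    intro h
    exact hnofix v v2 hG2 (Or.inr ⟨by rw [h, hinv], h.symm⟩)
  have hσv1 : σ v ≠ v1 := fun h => hvσ1 (by rw [← h, hinv])
  have hσv2 : σ v ≠ v2 := fun h => hvσ2 (by rw [← h, hinv])
  have hσ1σ2 : σ v1 ≠ σ v2 := fun h => h12 (hσinj h)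
  have hpu1 := SimpleGraph.isAcyclic_iff_path_unique.mp hT1.IsAcyclic
  have hpu2 := SimpleGraph.isAcyclic_iff_path_unique.mp hT2.IsAcyclic
  have part1 : T2.Adj v1 v2 := by
    have h' : (T1 ⊔ T2).Adj v1 v2 := hsup ▸ hadj
    rcases h' with h' | h'
    · exfalso
      have heq := congrArg (fun p : T1.Path v v2 => p.1.support)
        (hpu1 ⟨Walk.cons h2 Walk.nil, by simp [hv2]⟩
         ⟨Walk.cons h1 (Walk.cons h' Walk.nil), by simp [hv1, hv2, h12]⟩)
      simp at heq
    · exact h'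
  have part2 : ¬ G.Adj v1 (σ v2) := by
    intro h
    have h' : (T1 ⊔ T2).Adj v1 (σ v2) := hsup ▸ h
    rcases h' with h' | h'
    · have e1 : T1.Adj (σ v2) (σ v) := hT1inv v2 v h2.symm
      have e2 : T1.Adj v2 (σ v1) := by
        have := hT1inv v1 (σ v2) h'
        rw [hinv] at this
        exact this.symm
      have e3 : T1.Adj (σ v1) (σ v) := hT1inv v1 v h1.symm
      have heq := congrArg (fun p : T1.Path v (σ v) => p.1.support)
        (hpu1 ⟨Walk.cons h1 (Walk.cons h' (Walk.cons e1 Walk.nil)),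
          by simp [hv1, Ne.symm hv1, hvσ2, Ne.symm hvσ2, hvσv, Ne.symm hvσv,
            h1σ2, Ne.symm h1σ2, hσv1, Ne.symm hσv1, hσv2, Ne.symm hσv2, hσ1σ2, Ne.symm hσ1σ2, Ne.symm hv2]⟩
         ⟨Walk.cons h2 (Walk.cons e2 (Walk.cons e3 Walk.nil)),
          by simp [hv2, Ne.symm hv2, hvσ1, Ne.symm hvσ1, hvσv, Ne.symm hvσv,
            h2σ1, Ne.symm h2σ1, hσv2, Ne.symm hσv2, hσv1, Ne.symm hσv1, Ne.symm hv1]⟩)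
      simp at heq
      exact h12 heq.1
    · have f1 : T2.Adj (σ v1) v2 := by
        have := hT2inv v1 (σ v2) h'
        rwa [hinv] at this
      have f2 : T2.Adj (σ v1) (σ v2) := hT2inv v1 v2 part1
      have heq := congrArg (fun p : T2.Path v1 (σ v1) => p.1.support)
        (hpu2 ⟨Walk.cons part1 (Walk.cons f1.symm Walk.nil),
          by simp [h12, Ne.symm h12, h1σ1, Ne.symm h1σ1, h2σ1, Ne.symm h2σ1]⟩
         ⟨Walk.cons h' (Walk.cons f2.symm Walk.nil),
          by simp [h1σ2, Ne.symm h1σ2, h1σ1, Ne.symm h1σ1, hσ1σ2, Ne.symm hσ1σ2]⟩)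
      simp at heq
      exact h2σ2 heq
  refine ⟨part1, part2, ?_⟩
  intro h
  have : G.Adj v1 (σ v2) := by
    have := (haut (σ v1) v2).mp h
    rwa [hinv] at this
  exact part2 this
end

section
/- Let (G,θ) be an admissible pair with generator s and unique fixed vertex v0. Let v be a degree-3 vertex such that N(v) ∩ N(sv) = {v1, sv1} has exactly two elements, and write N(v) = {v1, sv1, v2}. Then v0 ∉ N(v), and not both edges vv1 and v(sv1) can lie in the same one of the two s-invariant spanning trees. -/
lemma two_paths_aux {V : Type*} {T : SimpleGraph V} (hT : T.IsTree)
    {v w a b : V} (hva : T.Adj v a) (haw : T.Adj a w)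
    (hvb : T.Adj v b) (hbw : T.Adj b w)
    (hvw : v ≠ w) (hab : a ≠ b) : False := by
  have hp1 : (SimpleGraph.Walk.cons hva (.cons haw .nil)).IsPath := by
    simp [SimpleGraph.Walk.isPath_def, hva.ne, haw.ne, hvw]
  have hp2 : (SimpleGraph.Walk.cons hvb (.cons hbw .nil)).IsPath := by
    simp [SimpleGraph.Walk.isPath_def, hvb.ne, hbw.ne, hvw]
  have heq := (hT.existsUnique_path v w).unique hp1 hp2
  have hsupp := congrArg SimpleGraph.Walk.support heq
  simp at hsupp
  exact hab hsupp

/-- For a degree-3 vertex `v` with `N(v) ∩ N(σ v) = {v1, σ v1}` of size two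
and `N(v) = {v1, σ v1, v2}`: the fixed vertex `v0` is not a neighbour of `v`,
and the edges `v v1` and `v (σ v1)` do not lie in the same spanning tree. -/
theorem stmt_8 {V : Type*} [Fintype V] (G : SimpleGraph V) (σ : V ≃ V)
    (hinv : ∀ a, σ (σ a) = a)
    (haut : ∀ a b, G.Adj a b ↔ G.Adj (σ a) (σ b))
    (T1 T2 : SimpleGraph V)
    (hsup : T1 ⊔ T2 = G)
    (hdisj : Disjoint T1.edgeSet T2.edgeSet)
    (hT1 : T1.IsTree) (hT2 : T2.IsTree)
    (hT1inv : ∀ a b, T1.Adj a b → T1.Adj (σ a) (σ b))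
    (hT2inv : ∀ a b, T2.Adj a b → T2.Adj (σ a) (σ b))
    (hnofix : ∀ a b, G.Adj a b → ¬ ((σ a = a ∧ σ b = b) ∨ (σ a = b ∧ σ b = a)))
    (v0 : V) (hv0 : σ v0 = v0)
    (v v1 v2 : V)
    (hdeg : (G.neighborSet v).ncard = 3)
    (hne : v1 ≠ σ v1)
    (hcap : G.neighborSet v ∩ G.neighborSet (σ v) = {v1, σ v1})
    (hN : G.neighborSet v = {v1, σ v1, v2}) :
    v0 ∉ G.neighborSet v ∧
    ¬ (T1.Adj v v1 ∧ T1.Adj v (σ v1)) ∧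
    ¬ (T2.Adj v v1 ∧ T2.Adj v (σ v1)) := by
  -- v ≠ σ v
  have hvσv : v ≠ σ v := by
    intro h
    have : G.neighborSet v ∩ G.neighborSet (σ v) = G.neighborSet v := by
      rw [← h]; exact Set.inter_self _
    rw [this] at hcap
    have h2 : (G.neighborSet v).ncard = 2 := by
      rw [hcap]; exact Set.ncard_pair hne
    omega
  refine ⟨?_, ?_, ?_⟩
  · intro hv0mem
    have h1 : G.Adj v v0 := hv0mem
    have h2 : G.Adj (σ v) v0 := by
      have := (haut v v0).mp h1
      rwa [hv0] at this
    have : v0 ∈ G.neighborSet v ∩ G.neighborSet (σ v) := ⟨h1, h2⟩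
    rw [hcap] at this
    simp only [Set.mem_insert_iff, Set.mem_singleton_iff] at this
    rcases this with h | h
    · apply hne
      rw [← h, hv0]
    · apply hne
      have h2 := congrArg σ h
      rw [hinv, hv0] at h2
      rw [← h, ← h2]
  · rintro ⟨h1, h2⟩
    have h1' : T1.Adj (σ v) (σ v1) := hT1inv _ _ h1
    have h2' : T1.Adj (σ v) v1 := by
      have := hT1inv _ _ h2; rwa [hinv] at this
    exact two_paths_aux hT1 h1 h2'.symm h2 h1'.symm hvσv hne
  · rintro ⟨h1, h2⟩
    have h1' : T2.Adj (σ v) (σ v1) := hT2inv _ _ h1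
    have h2' : T2.Adj (σ v) v1 := by
      have := hT2inv _ _ h2; rwa [hinv] at this
    exact two_paths_aux hT2 h1 h2'.symm h2 h1'.symm hvσv hne
end

section
/- Let (G,θ) be an admissible pair with generator s and let v be a degree-3 vertex with N(v) ∩ N(sv) = {v1, sv1, v2} of size 3, where v ≠ sv. Then v2 is the unique fixed vertex v0, and the edges vv1 and v(sv1) lie in different members of any pair of s-invariant edge-disjoint spanning trees G1, G2 whose union is G. -/
open SimpleGraph

lemma no4cycle {V : Type*} {T : SimpleGraph V} (hT : T.IsTree) {a b c d : V}
    (hac : a ≠ c) (hbd : b ≠ d)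
    (h1 : T.Adj a b) (h2 : T.Adj b c) (h3 : T.Adj a d) (h4 : T.Adj d c) : False := by
  have hp1 : (Walk.cons h1 (Walk.cons h2 Walk.nil) : T.Walk a c).IsPath := by
    simp [Walk.isPath_def, h1.ne, h2.ne, hac]
  have hp2 : (Walk.cons h3 (Walk.cons h4 Walk.nil) : T.Walk a c).IsPath := by
    simp [Walk.isPath_def, h3.ne, h4.ne, hac]
  obtain ⟨p, -, hu⟩ := hT.existsUnique_path a c
  have he := (hu _ hp1).trans (hu _ hp2).symm
  have hs := congrArg Walk.support he
  simp at hs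
  exact hbd hs

/-- For a degree-3 vertex `v` with `N(v) ∩ N(σ v) = {v1, σ v1, v2}` of size
three: `v2` is the fixed vertex, and the edges `v v1` and `v (σ v1)` lie in
different members of the pair of invariant spanning trees. -/
theorem stmt_9 {V : Type*} [Fintype V] (G : SimpleGraph V) (σ : V ≃ V)
    (hinv : ∀ a, σ (σ a) = a)
    (haut : ∀ a b, G.Adj a b ↔ G.Adj (σ a) (σ b))
    (T1 T2 : SimpleGraph V)
    (hsup : T1 ⊔ T2 = G)
    (hdisj : Disjoint T1.edgeSet T2.edgeSet)
    (hT1 : T1.IsTree) (hT2 : T2.IsTree)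
    (hT1inv : ∀ a b, T1.Adj a b → T1.Adj (σ a) (σ b))
    (hT2inv : ∀ a b, T2.Adj a b → T2.Adj (σ a) (σ b))
    (hnofix : ∀ a b, G.Adj a b → ¬ ((σ a = a ∧ σ b = b) ∨ (σ a = b ∧ σ b = a)))
    (v v1 v2 : V) (hvs : v ≠ σ v)
    (hdeg : (G.neighborSet v).ncard = 3)
    (hne1 : v1 ≠ σ v1) (hne2 : v1 ≠ v2) (hne3 : σ v1 ≠ v2)
    (hcap : G.neighborSet v ∩ G.neighborSet (σ v) = {v1, σ v1, v2}) :
    σ v2 = v2 ∧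
    ((T1.Adj v v1 ∧ T2.Adj v (σ v1)) ∨ (T2.Adj v v1 ∧ T1.Adj v (σ v1))) := by
  have hmem1 : v1 ∈ G.neighborSet v ∩ G.neighborSet (σ v) := by
    rw [hcap]; left; rfl
  have hmem2 : σ v1 ∈ G.neighborSet v ∩ G.neighborSet (σ v) := by
    rw [hcap]; right; left; rfl
  have hmem3 : v2 ∈ G.neighborSet v ∩ G.neighborSet (σ v) := by
    rw [hcap]; right; right; rfl
  have hGv1 : G.Adj v v1 := hmem1.1
  have hGsv1 : G.Adj (σ v) v1 := hmem1.2
  have hGvs1 : G.Adj v (σ v1) := hmem2.1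
  have hGsvs1 : G.Adj (σ v) (σ v1) := hmem2.2
  have hfix : σ v2 = v2 := by
    have hm : σ v2 ∈ G.neighborSet v ∩ G.neighborSet (σ v) := by
      constructor
      · have := (haut (σ v) v2).1 hmem3.2
        rwa [hinv] at this
      · exact (haut v v2).1 hmem3.1
    rw [hcap] at hm
    rcases hm with h | h | h
    · exfalso; apply hne3
      have := congrArg σ h
      rw [hinv] at this; exact this.symm
    · exfalso; apply hne2
      have := congrArg σ h
      rw [hinv, hinv] at this; exact this.symm
    · exact h
  refine ⟨hfix, ?_⟩
  have hor1 : T1.Adj v v1 ∨ T2.Adj v v1 := by rw [← hsup] at hGv1; exact hGv1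
  have hor2 : T1.Adj v (σ v1) ∨ T2.Adj v (σ v1) := by rw [← hsup] at hGvs1; exact hGvs1
  have same1 : ¬ (T1.Adj v v1 ∧ T1.Adj v (σ v1)) := by
    rintro ⟨h1, h2⟩
    have h3 : T1.Adj (σ v) (σ v1) := hT1inv _ _ h1
    have h4 : T1.Adj (σ v) v1 := by have := hT1inv _ _ h2; rwa [hinv] at this
    exact no4cycle hT1 hvs hne1 h1 h4.symm h2 h3.symm
  have same2 : ¬ (T2.Adj v v1 ∧ T2.Adj v (σ v1)) := by
    rintro ⟨h1, h2⟩
    have h3 : T2.Adj (σ v) (σ v1) := hT2inv _ _ h1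
    have h4 : T2.Adj (σ v) v1 := by have := hT2inv _ _ h2; rwa [hinv] at this
    exact no4cycle hT2 hvs hne1 h1 h4.symm h2 h3.symm
  rcases hor1 with h1 | h1 <;> rcases hor2 with h2 | h2
  · exact absurd ⟨h1, h2⟩ same1
  · exact Or.inl ⟨h1, h2⟩
  · exact Or.inr ⟨h1, h2⟩
  · exact absurd ⟨h1, h2⟩ same2
end

section
/- Let H be a finite simple graph with a Z2-action (generator s) which is the edge-disjoint union of two s-invariant spanning trees with no edge fixed by s. Let G be obtained from H by a (Z2,θ) 0-extension: add two new vertices v, sv (swapped by s) and edges vv1, vv2, s(vv1), s(vv2) for distinct v1, v2 ∈ V(H). Then G is the edge-disjoint union of two s-invariant spanning trees and no edge of G is fixed by s. -/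
/-!
Put `vv₁` and its image `s(vv₁)` into the first tree and `vv₂`, `s(vv₂)` into the second.
Since `v` and `σ v` are isolated in `H`, each new edge joins a vertex to a component it was not
connected to before, so both sides stay acyclic, and connectivity is inherited from `H₁`, `H₂`.
The four new edges are pairwise distinct and none of them is fixed by `σ`, because `v` and `σ v`
are distinct and different from `v₁`, `v₂`.
-/

namespace SimpleGraph

variable {V : Type*} {G : SimpleGraph V}

lemma not_reachable_of_forall_not_adj {u w : V} (hu : ∀ a, ¬ G.Adj u a) (huw : u ≠ w) :
    ¬ G.Reachable u w := by
  rintro ⟨_ | ⟨h, _⟩⟩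
  exacts [huw rfl, hu _ h]

lemma IsAcyclic.sup_edge_of_forall_not_adj {u w : V} (hG : G.IsAcyclic)
    (hu : ∀ a, ¬ G.Adj u a) (huw : u ≠ w) : (G ⊔ edge u w).IsAcyclic :=
  hG.sup_edge_of_not_reachable (not_reachable_of_forall_not_adj hu huw)

theorem isTree_sup_edge_sup_edge {u u' w w' : V} (hG : G.IsAcyclic)
    (hconn : ∀ x y, x ≠ u → x ≠ u' → y ≠ u → y ≠ u' → G.Reachable x y)
    (hu : ∀ a, ¬ G.Adj u a) (hu' : ∀ a, ¬ G.Adj u' a) (huu' : u ≠ u')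
    (hwu : w ≠ u) (hwu' : w ≠ u') (hw'u : w' ≠ u) (hw'u' : w' ≠ u') :
    (G ⊔ (edge u w ⊔ edge u' w')).IsTree := by
  rw [← sup_assoc]
  refine ⟨(connected_iff _).mpr ⟨fun x y ↦ ?_, ⟨u⟩⟩, ?_⟩
  · have hreach : ∀ x, (G ⊔ edge u w ⊔ edge u' w').Reachable x w := by
      have hle : G ≤ G ⊔ edge u w ⊔ edge u' w' := le_sup_left.trans le_sup_left
      intro x
      by_cases hxu : x = u
      · subst hxu
        exact Adj.reachable (by simp [edge_adj, hwu.symm])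
      by_cases hxu' : x = u'
      · subst hxu'
        exact (Adj.reachable (by simp [edge_adj, hw'u'.symm])).trans
          ((hconn w' w hw'u hw'u' hwu hwu').mono hle)
      exact (hconn x w hxu hxu' hwu hwu').mono hle
    exact (hreach x).trans (hreach y).symm
  · refine (hG.sup_edge_of_forall_not_adj hu hwu.symm).sup_edge_of_forall_not_adj ?_ hw'u'.symm
    rintro a (h | h)
    · exact hu' a h
    · rw [edge_adj] at h
      exact h.1.elim (fun h ↦ huu' h.1.symm) (fun h ↦ hwu' h.1.symm)

lemma disjoint_edge_sup_edge_of_forall_not_adj {u u' w w' : V} (hu : ∀ a, ¬ G.Adj u a)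
    (hu' : ∀ a, ¬ G.Adj u' a) : Disjoint G (edge u w ⊔ edge u' w') :=
  disjoint_sup_right.mpr ⟨(disjoint_edge _).mpr (hu w), (disjoint_edge _).mpr (hu' w')⟩

section Involution

variable {σ : V ≃ V}

def IsInvariant (σ : V ≃ V) (G : SimpleGraph V) : Prop :=
  ∀ a b, G.Adj a b → G.Adj (σ a) (σ b)

def FixesNoEdge (σ : V ≃ V) (G : SimpleGraph V) : Prop :=
  ∀ a b, G.Adj a b → s(σ a, σ b) ≠ s(a, b)

lemma IsInvariant.sup {G' : SimpleGraph V} (hG : G.IsInvariant σ) (hG' : G'.IsInvariant σ) :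
    (G ⊔ G').IsInvariant σ :=
  fun a b ↦ Or.imp (hG a b) (hG' a b)

lemma isInvariant_edge_sup_edge (hσ : ∀ a, σ (σ a) = a) (u w : V) :
    (edge u w ⊔ edge (σ u) (σ w)).IsInvariant σ := by
  intro a b h
  simp only [sup_adj, edge_adj] at h ⊢
  rcases h with ⟨⟨rfl, rfl⟩ | ⟨rfl, rfl⟩, hne⟩ | ⟨⟨rfl, rfl⟩ | ⟨rfl, rfl⟩, hne⟩ <;>
    simp_all [σ.injective.eq_iff]

lemma FixesNoEdge.sup {G' : SimpleGraph V} (hG : G.FixesNoEdge σ) (hG' : G'.FixesNoEdge σ) :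
    (G ⊔ G').FixesNoEdge σ :=
  fun a b h ↦ h.elim (hG a b) (hG' a b)

lemma fixesNoEdge_edge {u w : V} (hu : σ u ≠ u) (huw : σ u ≠ w) : (edge u w).FixesNoEdge σ := by
  intro a b h
  rw [edge_adj] at h
  rw [Ne, Sym2.eq_iff]
  rcases h with ⟨⟨rfl, rfl⟩ | ⟨rfl, rfl⟩, -⟩ <;> tauto

lemma FixesNoEdge.mono {G' : SimpleGraph V} (hG : G.FixesNoEdge σ) (hle : G' ≤ G) :
    G'.FixesNoEdge σ :=
  fun a b h ↦ hG a b (hle h)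

lemma fixesNoEdge_edge_sup_edge (hσ : ∀ a, σ (σ a) = a) {u w : V} (hu : σ u ≠ u)
    (huw : σ u ≠ w) : (edge u w ⊔ edge (σ u) (σ w)).FixesNoEdge σ := by
  refine (fixesNoEdge_edge hu huw).sup (fixesNoEdge_edge ?_ ?_) <;> rw [hσ]
  · exact hu.symm
  · rintro rfl
    exact huw (hσ w)

end Involution

end SimpleGraph

open SimpleGraph

theorem stmt_10_general {V : Type*} (H G : SimpleGraph V) (σ : V ≃ V)
    (hinv : ∀ a, σ (σ a) = a)
    (v v1 v2 : V)
    (hvs : v ≠ σ v) (h12 : v1 ≠ v2)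
    (h1v : v1 ≠ v) (h1sv : v1 ≠ σ v) (h2v : v2 ≠ v) (h2sv : v2 ≠ σ v)
    (hHv : ∀ a, ¬ H.Adj v a) (hHsv : ∀ a, ¬ H.Adj (σ v) a)
    (H1 H2 : SimpleGraph V)
    (hsupH : H1 ⊔ H2 = H)
    (hdisjH : Disjoint H1.edgeSet H2.edgeSet)
    (hH1 : H1.IsAcyclic) (hH2 : H2.IsAcyclic)
    (hH1conn : ∀ x y : V, x ≠ v → x ≠ σ v → y ≠ v → y ≠ σ v → H1.Reachable x y)
    (hH2conn : ∀ x y : V, x ≠ v → x ≠ σ v → y ≠ v → y ≠ σ v → H2.Reachable x y)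
    (hH1inv : ∀ a b, H1.Adj a b → H1.Adj (σ a) (σ b))
    (hH2inv : ∀ a b, H2.Adj a b → H2.Adj (σ a) (σ b))
    (hnofixH : ∀ a b, H.Adj a b → ¬ ((σ a = a ∧ σ b = b) ∨ (σ a = b ∧ σ b = a)))
    (hG : G = H ⊔ SimpleGraph.fromEdgeSet
      {s(v, v1), s(v, v2), s(σ v, σ v1), s(σ v, σ v2)}) :
    ∃ G1 G2 : SimpleGraph V,
      G1 ⊔ G2 = G ∧
      Disjoint G1.edgeSet G2.edgeSet ∧
      G1.IsTree ∧ G2.IsTree ∧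
      (∀ a b, G1.Adj a b → G1.Adj (σ a) (σ b)) ∧
      (∀ a b, G2.Adj a b → G2.Adj (σ a) (σ b)) ∧
      (∀ a b, G.Adj a b → ¬ ((σ a = a ∧ σ b = b) ∨ (σ a = b ∧ σ b = a))) := by
  have hle1 : H1 ≤ H := hsupH ▸ le_sup_left
  have hle2 : H2 ≤ H := hsupH ▸ le_sup_right
  have hH1v : ∀ a, ¬ H1.Adj v a := fun a h ↦ hHv a (hle1 h)
  have hH1sv : ∀ a, ¬ H1.Adj (σ v) a := fun a h ↦ hHsv a (hle1 h)
  have hH2v : ∀ a, ¬ H2.Adj v a := fun a h ↦ hHv a (hle2 h)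
  have hH2sv : ∀ a, ¬ H2.Adj (σ v) a := fun a h ↦ hHsv a (hle2 h)
  have hs1v : σ v1 ≠ v := fun h ↦ h1sv (by rw [← h, hinv])
  have hs2v : σ v2 ≠ v := fun h ↦ h2sv (by rw [← h, hinv])
  set G1 := H1 ⊔ (edge v v1 ⊔ edge (σ v) (σ v1))
  set G2 := H2 ⊔ (edge v v2 ⊔ edge (σ v) (σ v2))
  have hdecomp : G1 ⊔ G2 = G := by
    rw [hG, ← hsupH]
    simp only [G1, G2, Set.insert_eq, fromEdgeSet_union, edge]
    ac_rfl
  have hdisj : Disjoint G1 G2 := by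
    rw [disjoint_edgeSet] at hdisjH
    refine disjoint_sup_left.mpr ⟨disjoint_sup_right.mpr
      ⟨hdisjH, disjoint_edge_sup_edge_of_forall_not_adj hH1v hH1sv⟩,
      disjoint_sup_right.mpr ⟨(disjoint_edge_sup_edge_of_forall_not_adj hH2v hH2sv).symm, ?_⟩⟩
    simp [disjoint_edge, edge_adj, h12.symm, hvs, hvs.symm, h1sv.symm, h2sv, h2v,
      σ.injective.eq_iff]
  have hfixH : H.FixesNoEdge σ := fun a b h ↦ by simpa only [Ne, Sym2.eq_iff] using hnofixH a b h
  have hfix : G.FixesNoEdge σ := hdecomp ▸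
    ((hfixH.mono hle1).sup (fixesNoEdge_edge_sup_edge hinv hvs.symm h1sv.symm)).sup
      ((hfixH.mono hle2).sup (fixesNoEdge_edge_sup_edge hinv hvs.symm h2sv.symm))
  exact ⟨G1, G2, hdecomp, disjoint_edgeSet.mpr hdisj,
    isTree_sup_edge_sup_edge hH1 hH1conn hH1v hH1sv hvs h1v h1sv hs1v (σ.injective.ne h1v),
    isTree_sup_edge_sup_edge hH2 hH2conn hH2v hH2sv hvs h2v h2sv hs2v (σ.injective.ne h2v),
    IsInvariant.sup (G := H1) hH1inv (isInvariant_edge_sup_edge hinv v v1),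
    IsInvariant.sup (G := H2) hH2inv (isInvariant_edge_sup_edge hinv v v2),
    fun a b h ↦ by simpa only [Ne, Sym2.eq_iff] using hfix a b h⟩

/-- A (Z2,θ) 0-extension of an admissible graph is admissible: adding a
symmetric pair of new degree-2 vertices `v, σ v` joined to `v1, v2` and
`σ v1, σ v2` preserves the edge-disjoint decomposition into two invariant
spanning trees with no fixed edge. Here the vertex type `V` consists of the
vertices of `H` together with `v` and `σ v`, which are isolated in `H`. -/
theorem stmt_10 {V : Type*} [Fintype V] (H G : SimpleGraph V) (σ : V ≃ V)
    (hinv : ∀ a, σ (σ a) = a)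
    (hautH : ∀ a b, H.Adj a b ↔ H.Adj (σ a) (σ b))
    (v v1 v2 : V)
    (hvs : v ≠ σ v) (h12 : v1 ≠ v2)
    (h1v : v1 ≠ v) (h1sv : v1 ≠ σ v) (h2v : v2 ≠ v) (h2sv : v2 ≠ σ v)
    (hHv : ∀ a, ¬ H.Adj v a) (hHsv : ∀ a, ¬ H.Adj (σ v) a)
    (H1 H2 : SimpleGraph V)
    (hsupH : H1 ⊔ H2 = H)
    (hdisjH : Disjoint H1.edgeSet H2.edgeSet)
    (hH1 : H1.IsAcyclic) (hH2 : H2.IsAcyclic)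
    (hH1conn : ∀ x y : V, x ≠ v → x ≠ σ v → y ≠ v → y ≠ σ v → H1.Reachable x y)
    (hH2conn : ∀ x y : V, x ≠ v → x ≠ σ v → y ≠ v → y ≠ σ v → H2.Reachable x y)
    (hH1inv : ∀ a b, H1.Adj a b → H1.Adj (σ a) (σ b))
    (hH2inv : ∀ a b, H2.Adj a b → H2.Adj (σ a) (σ b))
    (hnofixH : ∀ a b, H.Adj a b → ¬ ((σ a = a ∧ σ b = b) ∨ (σ a = b ∧ σ b = a)))
    (hG : G = H ⊔ SimpleGraph.fromEdgeSet
      {s(v, v1), s(v, v2), s(σ v, σ v1), s(σ v, σ v2)}) :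
    ∃ G1 G2 : SimpleGraph V,
      G1 ⊔ G2 = G ∧
      Disjoint G1.edgeSet G2.edgeSet ∧
      G1.IsTree ∧ G2.IsTree ∧
      (∀ a b, G1.Adj a b → G1.Adj (σ a) (σ b)) ∧
      (∀ a b, G2.Adj a b → G2.Adj (σ a) (σ b)) ∧
      (∀ a b, G.Adj a b → ¬ ((σ a = a ∧ σ b = b) ∨ (σ a = b ∧ σ b = a))) :=
  stmt_10_general H G σ hinv v v1 v2 hvs h12 h1v h1sv h2v h2sv hHv hHsv H1 H2 hsupH hdisjH hH1 hH2
    hH1conn hH2conn hH1inv hH2inv hnofixH hG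
end

section
/- Let G be a finite simple graph with a Z2-action (generator s) such that G is the edge-disjoint union of two s-invariant spanning trees and no edge is fixed by s. If G has exactly 5 vertices, then G is isomorphic to the wheel graph W5 (with the action matching the standard one fixing the hub). -/
/-!
Every edge of `G` is moved by `σ`, so `G` is a subgraph of the graph of all pairs `{a, b}` that
the involution `σ` does not map to themselves. An involution of a 5-element set with `f` fixed
points moves `10 - C(f, 2) - (5 - f) / 2` pairs, i.e. `0`, `6` or `8` pairs for `f = 5, 3, 1`.
Being a union of two edge-disjoint spanning trees, `G` has `2 * (5 - 1) = 8` edges, so `σ` has a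
single fixed point, which makes it conjugate to the standard involution of `W5`, and `G` is the
whole graph of moved pairs, which for the standard involution is `W5`.
-/

/-- The wheel graph `W5` on `Fin 5` with hub `0`. -/
def W5 : SimpleGraph (Fin 5) := SimpleGraph.fromEdgeSet
  {s(0,1), s(0,2), s(0,3), s(0,4), s(1,2), s(2,3), s(3,4), s(4,1)}

/-- The involution `v1 ↔ v3`, `v2 ↔ v4`, fixing the hub `0`. -/
def sW5 : Fin 5 ≃ Fin 5 := (Equiv.swap 1 3).trans (Equiv.swap 2 4)

open SimpleGraph Function Finset

def movedEdgesGraph {V : Type*} (σ : V ≃ V) : SimpleGraph V where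
  Adj a b := a ≠ b ∧ s(σ a, σ b) ≠ s(a, b)
  symm := ⟨fun a b h => ⟨h.1.symm, by rw [Sym2.eq_swap, Sym2.eq_swap (a := b)]; exact h.2⟩⟩
  loopless := ⟨fun _ h => h.1 rfl⟩

instance {V : Type*} [DecidableEq V] (σ : V ≃ V) : DecidableRel (movedEdgesGraph σ).Adj :=
  fun _ _ => inferInstanceAs (Decidable (_ ≠ _ ∧ _ ≠ _))

theorem le_movedEdgesGraph {V : Type*} {G : SimpleGraph V} {σ : V ≃ V}
    (h : ∀ a b, G.Adj a b → ¬ ((σ a = a ∧ σ b = b) ∨ (σ a = b ∧ σ b = a))) :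
    G ≤ movedEdgesGraph σ := fun a b hab => ⟨hab.ne, by rw [Ne, Sym2.eq_iff]; exact h a b hab⟩

def movedEdgesGraphIso {V W : Type*} {σ : V ≃ V} {τ : W ≃ W} (e : V ≃ W)
    (h : Semiconj e σ τ) : movedEdgesGraph σ ≃g movedEdgesGraph τ where
  toEquiv := e
  map_rel_iff' {a b} := by
    simp only [movedEdgesGraph, ← h a, ← h b, ne_eq, Sym2.eq_iff, EmbeddingLike.apply_eq_iff_eq]

theorem card_edgeFinset_sup_of_isTree {V : Type*} [Fintype V]
    {T₁ T₂ : SimpleGraph V} [Fintype T₁.edgeSet] [Fintype T₂.edgeSet]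
    [Fintype (T₁ ⊔ T₂).edgeSet] (hdisj : Disjoint T₁.edgeSet T₂.edgeSet)
    (hT₁ : T₁.IsTree) (hT₂ : T₂.IsTree) :
    #(T₁ ⊔ T₂).edgeFinset = 2 * (Fintype.card V - 1) := by
  classical
  have hdisj' : Disjoint T₁.edgeFinset T₂.edgeFinset := by
    simpa [edgeFinset, Set.disjoint_toFinset] using hdisj
  have h₁ := hT₁.card_edgeFinset
  have h₂ := hT₂.card_edgeFinset
  rw [edgeFinset_sup, card_union_of_disjoint hdisj']
  omega

theorem eq_of_le_of_card_edgeFinset_le {V : Type*} {G H : SimpleGraph V} [Fintype G.edgeSet]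
    [Fintype H.edgeSet] (hle : G ≤ H) (hcard : #H.edgeFinset ≤ #G.edgeFinset) : G = H :=
  edgeFinset_inj.mp (eq_of_subset_of_card_le (edgeFinset_subset_edgeFinset.mpr hle) hcard)

instance : DecidableRel W5.Adj := fun _ _ => decidable_of_iff' _ (fromEdgeSet_adj _)

theorem movedEdgesGraph_sW5 : movedEdgesGraph sW5 = W5 := by
  ext a b
  revert a b
  decide

theorem card_edgeFinset_movedEdgesGraph_sW5 : #(movedEdgesGraph sW5).edgeFinset = 8 := by
  decide

set_option maxRecDepth 10000 in
theorem exists_semiconj_sW5 (σ : Equiv.Perm (Fin 5)) (hσ : Involutive σ)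
    (h : 8 ≤ #(movedEdgesGraph σ).edgeFinset) : ∃ τ : Equiv.Perm (Fin 5), Semiconj τ σ sW5 := by
  revert σ
  unfold Involutive Semiconj
  decide

theorem stmt_14_general {V : Type*} [Fintype V] (G : SimpleGraph V) (σ : V ≃ V)
    (hcard : Fintype.card V = 5)
    (hinv : ∀ a, σ (σ a) = a)
    (T1 T2 : SimpleGraph V)
    (hsup : T1 ⊔ T2 = G)
    (hdisj : Disjoint T1.edgeSet T2.edgeSet)
    (hT1 : T1.IsTree) (hT2 : T2.IsTree)
    (hnofix : ∀ a b, G.Adj a b → ¬ ((σ a = a ∧ σ b = b) ∨ (σ a = b ∧ σ b = a))) :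
    ∃ φ : G ≃g W5, ∀ x, φ (σ x) = sW5 (φ x) := by
  classical
  have hG : #G.edgeFinset = 8 := by
    subst hsup
    convert card_edgeFinset_sup_of_isTree hdisj hT1 hT2
    rw [hcard]
  have hle : G ≤ movedEdgesGraph σ := le_movedEdgesGraph hnofix
  obtain e₀ : V ≃ Fin 5 := Fintype.equivFinOfCardEq hcard
  have he₀ : Semiconj e₀ σ (e₀.permCongr σ) := fun x => by simp
  obtain ⟨τ, hτ⟩ := exists_semiconj_sW5 (e₀.permCongr σ) (fun x => by simp [hinv]) <| by
    rw [← (movedEdgesGraphIso e₀ he₀).card_edgeFinset_eq, ← hG]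
    exact card_le_card (edgeFinset_subset_edgeFinset.mpr hle)
  have he : Semiconj (e₀.trans τ) σ sW5 := he₀.trans hτ
  have hGmoved : G = movedEdgesGraph σ := by
    refine eq_of_le_of_card_edgeFinset_le hle ?_
    rw [(movedEdgesGraphIso _ he).card_edgeFinset_eq, card_edgeFinset_movedEdgesGraph_sW5, hG]
  rw [hGmoved, ← movedEdgesGraph_sW5]
  exact ⟨movedEdgesGraphIso _ he, he⟩

/-- An admissible Z2-symmetric graph on 5 vertices is isomorphic to the
wheel `W5`, equivariantly with respect to the standard action on `W5`. -/
theorem stmt_14 {V : Type*} [Fintype V] (G : SimpleGraph V) (σ : V ≃ V)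
    (hcard : Fintype.card V = 5)
    (hinv : ∀ a, σ (σ a) = a)
    (haut : ∀ a b, G.Adj a b ↔ G.Adj (σ a) (σ b))
    (T1 T2 : SimpleGraph V)
    (hsup : T1 ⊔ T2 = G)
    (hdisj : Disjoint T1.edgeSet T2.edgeSet)
    (hT1 : T1.IsTree) (hT2 : T2.IsTree)
    (hT1inv : ∀ a b, T1.Adj a b → T1.Adj (σ a) (σ b))
    (hT2inv : ∀ a b, T2.Adj a b → T2.Adj (σ a) (σ b))
    (hnofix : ∀ a b, G.Adj a b → ¬ ((σ a = a ∧ σ b = b) ∨ (σ a = b ∧ σ b = a))) :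
    ∃ φ : G ≃g W5, ∀ x, φ (σ x) = sW5 (φ x) :=
  stmt_14_general G σ hcard hinv T1 T2 hsup hdisj hT1 hT2 hnofix
end

section
/- Let (G,θ) be an admissible pair with generator s, and let v be a degree-3 vertex with N(v) ∩ N(sv) = {v0, v1, sv1} of size 3, where v0 is the fixed vertex. If additionally v0v1 ∈ E(G), then the symmetric neighbourhood S(v), i.e. the subgraph induced on N(v) ∪ N(sv) ∪ {v, sv} = {v, sv, v0, v1, sv1}, is isomorphic to the wheel graph W5 with hub v0. -/
set_option maxHeartbeats 1600000 in
/-- If `v` has degree 3 with `N(v) = N(σ v) = {v0, v1, σ v1}` (`v0` the fixed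
vertex) and `v0 v1 ∈ E(G)`, then the symmetric neighbourhood of `v`, i.e. the
subgraph induced on `{v, σ v, v0, v1, σ v1}`, is isomorphic to the wheel `W5`
with hub `v0`. -/
theorem stmt_15 {V : Type*} [Fintype V] (G : SimpleGraph V) (σ : V ≃ V)
    (hinv : ∀ a, σ (σ a) = a)
    (haut : ∀ a b, G.Adj a b ↔ G.Adj (σ a) (σ b))
    (T1 T2 : SimpleGraph V)
    (hsup : T1 ⊔ T2 = G)
    (hdisj : Disjoint T1.edgeSet T2.edgeSet)
    (hT1 : T1.IsTree) (hT2 : T2.IsTree)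
    (hT1inv : ∀ a b, T1.Adj a b → T1.Adj (σ a) (σ b))
    (hT2inv : ∀ a b, T2.Adj a b → T2.Adj (σ a) (σ b))
    (hnofix : ∀ a b, G.Adj a b → ¬ ((σ a = a ∧ σ b = b) ∨ (σ a = b ∧ σ b = a)))
    (v0 v v1 : V) (hv0 : σ v0 = v0)
    (hvs : v ≠ σ v)
    (hne1 : v1 ≠ σ v1) (hne2 : v1 ≠ v0) (hne3 : σ v1 ≠ v0)
    (hdeg : (G.neighborSet v).ncard = 3)
    (hNv : G.neighborSet v = {v0, v1, σ v1})
    (hNsv : G.neighborSet (σ v) = {v0, v1, σ v1})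
    (hadj : G.Adj v0 v1) :
    ∃ φ : (G.induce ({v, σ v, v0, v1, σ v1} : Set V)) ≃g W5,
      φ ⟨v0, by simp⟩ = 0 := by
  -- adjacency facts
  have mem3 : ∀ x, x ∈ ({v0, v1, σ v1} : Set V) → G.Adj v x := by
    intro x hx; rw [← hNv] at hx; exact hx
  have mem3' : ∀ x, x ∈ ({v0, v1, σ v1} : Set V) → G.Adj (σ v) x := by
    intro x hx; rw [← hNsv] at hx; exact hx
  have hvv0 : G.Adj v v0 := mem3 v0 (by simp)
  have hvv1 : G.Adj v v1 := mem3 v1 (by simp)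
  have hvsv1 : G.Adj v (σ v1) := mem3 (σ v1) (by simp)
  have hsvv0 : G.Adj (σ v) v0 := mem3' v0 (by simp)
  have hsvv1 : G.Adj (σ v) v1 := mem3' v1 (by simp)
  have hsvsv1 : G.Adj (σ v) (σ v1) := mem3' (σ v1) (by simp)
  have hv0sv1 : G.Adj v0 (σ v1) := by
    have h := haut v0 v1
    rw [hv0] at h
    exact h.mp hadj
  -- non-edges
  have hnvsv : ¬ G.Adj v (σ v) := fun h => hnofix v (σ v) h (Or.inr ⟨rfl, hinv v⟩)
  have hnv1 : ¬ G.Adj v1 (σ v1) := fun h => hnofix v1 (σ v1) h (Or.inr ⟨rfl, hinv v1⟩)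
  -- distinctness
  have d1 : v ≠ v0 := G.ne_of_adj hvv0
  have d2 : v ≠ v1 := G.ne_of_adj hvv1
  have d3 : v ≠ σ v1 := G.ne_of_adj hvsv1
  have d4 : σ v ≠ v0 := G.ne_of_adj hsvv0
  have d5 : σ v ≠ v1 := G.ne_of_adj hsvv1
  have d6 : σ v ≠ σ v1 := G.ne_of_adj hsvsv1
  set S : Set V := {v, σ v, v0, v1, σ v1} with hS
  have d1' := d1.symm
  have d2' := d2.symm
  have d3' := d3.symm
  have d4' := d4.symm
  have d5' := d5.symm
  have d6' := d6.symm
  have hvs' := hvs.symm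
  have hne1' := hne1.symm
  have hne2' := hne2.symm
  have hne3' := hne3.symm
  let f : Fin 5 → S := fun i => match i with
    | 0 => ⟨v0, by simp [hS]⟩
    | 1 => ⟨v, by simp [hS]⟩
    | 2 => ⟨v1, by simp [hS]⟩
    | 3 => ⟨σ v, by simp [hS]⟩
    | 4 => ⟨σ v1, by simp [hS]⟩
  have hinj : Function.Injective f := by
    intro i j hij
    have h : ((f i : S) : V) = ((f j : S) : V) := congrArg Subtype.val hij
    fin_cases i <;> fin_cases j <;>
      first
        | rfl
        | exact absurd h (by assumption)
  have hsurj : Function.Surjective f := by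
    rintro ⟨x, hx⟩
    simp only [hS, Set.mem_insert_iff, Set.mem_singleton_iff] at hx
    rcases hx with rfl | rfl | rfl | rfl | rfl
    exacts [⟨1, rfl⟩, ⟨3, rfl⟩, ⟨0, rfl⟩, ⟨2, rfl⟩, ⟨4, rfl⟩]
  let e : Fin 5 ≃ S := Equiv.ofBijective f ⟨hinj, hsurj⟩
  have hnvsv' : ¬ G.Adj (σ v) v := fun h => hnvsv h.symm
  have hnv1' : ¬ G.Adj (σ v1) v1 := fun h => hnv1 h.symm
  have hco : ∀ i : Fin 5, ((e i : S) : V) = ![v0, v, v1, σ v, σ v1] i := by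
    intro i; fin_cases i <;> rfl
  have hadjW : ∀ i j : Fin 5, (G.induce S).Adj (e i) (e j) ↔ W5.Adj i j := by
    intro i j
    rw [SimpleGraph.comap_adj, Function.Embedding.coe_subtype, hco i, hco j]
    fin_cases i <;> fin_cases j <;>
      simp only [Matrix.cons_val_zero, Matrix.cons_val_one, Matrix.head_cons,
        Matrix.cons_val_two, Matrix.tail_cons, Matrix.cons_val_three,
        Matrix.cons_val_four, Matrix.head_fin_const, Fin.isValue] <;>
      simp [W5, SimpleGraph.fromEdgeSet_adj, Sym2.eq_iff, Set.mem_insert_iff, Set.mem_singleton_iff,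
        hvv0, hvv1, hvsv1, hsvv0, hsvv1, hsvsv1, hv0sv1, hadj,
        hvv0.symm, hvv1.symm, hvsv1.symm, hsvv0.symm, hsvv1.symm, hsvsv1.symm,
        hv0sv1.symm, hadj.symm, hnvsv, hnv1, hnvsv', hnv1'] <;>
      decide
  let ψ : W5 ≃g (G.induce S) := ⟨e, by intro i j; exact hadjW i j⟩
  refine ⟨ψ.symm, ?_⟩
  have h0 : (⟨v0, by simp [hS]⟩ : S) = ψ 0 := rfl
  rw [h0]
  exact ψ.symm_apply_apply 0
end

section
/- Let (G,θ) be an admissible pair with generator s, and let v be a degree-3 vertex with N(v) and N(sv) intersecting in exactly three vertices. Write G as the edge-disjoint union of s-invariant spanning trees G1 and G2. Then the edges vv1 and v(sv1) cannot both belong to the same spanning tree, where N(v) = {v0, v1, sv1} with v0 the fixed vertex. -/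
lemma no_four_cycle {V : Type*} {T : SimpleGraph V} (hT : T.IsAcyclic) {a b c d : V}
    (hab : T.Adj a b) (hbc : T.Adj b c) (hcd : T.Adj c d) (hda : T.Adj d a)
    (hac : a ≠ c) (hbd : b ≠ d) : False := by
  apply hT (.cons hab (.cons hbc (.cons hcd (.cons hda .nil))))
  have h1 := hab.ne
  have h2 := hbc.ne
  have h3 := hcd.ne
  have h4 := hda.ne
  simp only [SimpleGraph.Walk.isCycle_def, SimpleGraph.Walk.isTrail_def,
    SimpleGraph.Walk.edges_cons, SimpleGraph.Walk.edges_nil,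
    SimpleGraph.Walk.support_cons, SimpleGraph.Walk.support_nil,
    List.tail_cons, List.nodup_cons, List.mem_cons, List.not_mem_nil,
    List.nodup_nil, Sym2.eq_iff, ne_eq]
  refine ⟨⟨?_, ?_⟩, ?_, ?_⟩ <;> aesop

/-- For a degree-3 vertex `v` with `N(v) = {v0, v1, σ v1}` where `N(v)` and
`N(σ v)` intersect in three vertices (`v0` being the fixed vertex), the edges
`v v1` and `v (σ v1)` cannot both belong to the same spanning tree. -/
theorem stmt_16 {V : Type*} [Fintype V] (G : SimpleGraph V) (σ : V ≃ V)
    (hinv : ∀ a, σ (σ a) = a)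
    (haut : ∀ a b, G.Adj a b ↔ G.Adj (σ a) (σ b))
    (T1 T2 : SimpleGraph V)
    (hsup : T1 ⊔ T2 = G)
    (hdisj : Disjoint T1.edgeSet T2.edgeSet)
    (hT1 : T1.IsTree) (hT2 : T2.IsTree)
    (hT1inv : ∀ a b, T1.Adj a b → T1.Adj (σ a) (σ b))
    (hT2inv : ∀ a b, T2.Adj a b → T2.Adj (σ a) (σ b))
    (hnofix : ∀ a b, G.Adj a b → ¬ ((σ a = a ∧ σ b = b) ∨ (σ a = b ∧ σ b = a)))
    (v0 v v1 : V) (hv0 : σ v0 = v0) (hvs : v ≠ σ v)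
    (hne1 : v1 ≠ σ v1) (hne2 : v1 ≠ v0) (hne3 : σ v1 ≠ v0)
    (hdeg : (G.neighborSet v).ncard = 3)
    (hNv : G.neighborSet v = {v0, v1, σ v1})
    (hcap : G.neighborSet v ∩ G.neighborSet (σ v) = {v0, v1, σ v1}) :
    ¬ (T1.Adj v v1 ∧ T1.Adj v (σ v1)) ∧ ¬ (T2.Adj v v1 ∧ T2.Adj v (σ v1)) := by
  constructor
  · rintro ⟨h1, h2⟩
    have h3 : T1.Adj (σ v) (σ v1) := hT1inv _ _ h1
    have h4 : T1.Adj (σ v) v1 := by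
      have := hT1inv _ _ h2; rwa [hinv] at this
    exact no_four_cycle hT1.IsAcyclic h1 h4.symm h3 h2.symm hvs hne1
  · rintro ⟨h1, h2⟩
    have h3 : T2.Adj (σ v) (σ v1) := hT2inv _ _ h1
    have h4 : T2.Adj (σ v) v1 := by
      have := hT2inv _ _ h2; rwa [hinv] at this
    exact no_four_cycle hT2.IsAcyclic h1 h4.symm h3 h2.symm hvs hne1
end
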